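/- arXiv:2012.04521 — 2 statements merged into one kernel-verified Lean document; each statement's English description precedes it below -/
import Mathlib

section
/- Let φ be a spectrum (in particular bounded). Then for every nonnegative real random variable X, ρ_φ(X) = inf_{g∈G} { E[g(X)] + ∫_0^1 g^*(φ(u)) du }, the equality holding in (−∞,∞]; in particular, if X is not integrable then both sides equal +∞. -/
open MeasureTheory Set NNReal ENNReal

/-- Quantile function `F_X⁻¹(u) = inf {x | u ≤ F_X(x)}`. -/
noncomputable def quantile {Ω : Type*} [MeasurableSpace Ω] (P : Measure Ω)
    (X : Ω → ℝ) (u : ℝ) : ℝ :=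
  sInf {x : ℝ | u ≤ (P {ω | X ω ≤ x}).toReal}

/-- Spectral risk measure `ρ_φ(X) = ∫_0^1 F_X⁻¹(u) φ(u) du ∈ [0,∞]`. -/
noncomputable def specRisk {Ω : Type*} [MeasurableSpace Ω] (P : Measure Ω)
    (φ : ℝ → ℝ) (X : Ω → ℝ) : ℝ≥0∞ :=
  ∫⁻ u in Set.Ioo (0:ℝ) 1, ENNReal.ofReal (quantile P X u * φ u)

/-- `φ` is a spectrum. -/
def IsSpectrum (φ : ℝ → ℝ) : Prop :=
  MonotoneOn φ (Set.Icc 0 1) ∧ (∀ u ∈ Set.Icc (0:ℝ) 1, 0 ≤ φ u) ∧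
    (∀ t ∈ Set.Ico (0:ℝ) 1, ContinuousWithinAt φ (Set.Ici t) t) ∧
    (∫ u in Set.Ioo (0:ℝ) 1, φ u) = 1

/-- Convex conjugate `g^*(y) = sup_{s ∈ ℝ} (s y - g s)`, with values in `(-∞,∞]`. -/
noncomputable def conj (g : ℝ → ℝ) (y : ℝ) : EReal :=
  ⨆ s : ℝ, ((s * y - g s : ℝ) : EReal)

/-- The nonnegative part of an extended real number, as an element of `[0,∞]`. -/
noncomputable def erealToENNReal (x : EReal) : ℝ≥0∞ :=
  if x = ⊤ then ⊤ else ENNReal.ofReal x.toReal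

/-- Expectation `E[g(X)] ∈ (-∞,∞]` of `g(X)` when `g(X) ≥ b` pointwise
(written via the nonnegative part `g(X) - b`). -/
noncomputable def expFrom {Ω : Type*} [MeasurableSpace Ω] (P : Measure Ω)
    (g : ℝ → ℝ) (X : Ω → ℝ) (b : ℝ) : EReal :=
  ((∫⁻ ω, ENNReal.ofReal (g (X ω) - b) ∂P : ℝ≥0∞) : EReal) + (b : EReal)

/-- `∫_0^1 g^*(φ(u)) du ∈ (-∞,∞]`, written via the shift `g^*(φ(u)) + b ≥ 0`
(valid whenever `g^* ∘ φ ≥ -b` on `(0,1)`). -/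
noncomputable def intConj (φ : ℝ → ℝ) (g : ℝ → ℝ) (b : ℝ) : EReal :=
  ((∫⁻ u in Set.Ioo (0:ℝ) 1, erealToENNReal (conj g (φ u) + (b : EReal)) : ℝ≥0∞) : EReal)
    - (b : EReal)

/-- The set `G` of increasing convex functions `g : ℝ → ℝ`. -/
def IncConvex : Set (ℝ → ℝ) := {g | Monotone g ∧ ConvexOn ℝ Set.univ g}

/-!
Fenchel–Young gives `q φ(u) ≤ g(q) + g^*(φ(u))` for every `g`; taking `q = F_X⁻¹(u)` and
integrating over `u ∈ (0,1)`, the quantile function transports Lebesgue measure on `(0,1)` to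
the law of `X`, so `ρ_φ(X) ≤ E[g(X)] + ∫_0^1 g^*(φ(u)) du`. Equality holds for
`g₀(x) = ∫_0^x φ(F_X(t)) dt`: since `φ ∘ F_X` is increasing and crosses the level `φ(u)` at
`F_X⁻¹(u)`, the slope `φ(u)` is a subgradient of `g₀` at `F_X⁻¹(u)`, which makes Fenchel–Young
an equality there. If `X` is not integrable, then `∫_0^1 F_X⁻¹ = E[X] = ∞`; as `F_X⁻¹` is
bounded on `(0, u₀]`, already `∫_{u₀}^1 F_X⁻¹ = ∞`, and `∫ φ = 1` provides a `u₀ < 1` with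
`φ ≥ φ(u₀) > 0` on `(u₀, 1)`.
-/

open ProbabilityTheory Filter Topology

section Primitive

variable {ψ : ℝ → ℝ}

theorem Monotone.sub_mul_le_integral_sub (hψ : Monotone ψ) {q c : ℝ}
    (hlt : ∀ t < q, ψ t ≤ c) (hle : c ≤ ψ q) (s : ℝ) :
    (s - q) * c ≤ (∫ t in (0:ℝ)..s, ψ t) - ∫ t in (0:ℝ)..q, ψ t := by
  rw [intervalIntegral.integral_interval_sub_left hψ.intervalIntegrable hψ.intervalIntegrable]
  rcases le_or_gt q s with hqs | hsq
  · calc (s - q) * c = ∫ _ in q..s, c := by simp [mul_comm]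
      _ ≤ ∫ t in q..s, ψ t :=
        intervalIntegral.integral_mono_on hqs intervalIntegrable_const hψ.intervalIntegrable
          fun t ht => hle.trans (hψ ht.1)
  · have : ∫ t in s..q, ψ t ≤ (q - s) * c :=
      calc ∫ t in s..q, ψ t ≤ ∫ _ in s..q, c :=
            intervalIntegral.integral_mono_on_of_le_Ioo hsq.le hψ.intervalIntegrable
              intervalIntegrable_const fun t ht => hlt t ht.2
        _ = (q - s) * c := by simp [mul_comm]
    rw [intervalIntegral.integral_symm]
    linarith

theorem Monotone.convexOn_primitive (hψ : Monotone ψ) :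
    ConvexOn ℝ univ (fun x => ∫ t in (0:ℝ)..x, ψ t) := by
  refine convexOn_of_slope_mono_adjacent convex_univ fun {x y z} _ _ hxy hyz => ?_
  have hsub := hψ.sub_mul_le_integral_sub (q := y) (fun t ht => hψ ht.le) le_rfl
  have hleft := hsub x
  have hright := hsub z
  rw [div_le_div_iff₀ (by linarith) (by linarith)]
  nlinarith [mul_le_mul_of_nonneg_left hright (sub_pos.2 hxy).le,
    mul_le_mul_of_nonneg_left hleft (sub_pos.2 hyz).le]

theorem Monotone.monotone_primitive (hψ : Monotone ψ) (h0 : ∀ t, 0 ≤ ψ t) :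
    Monotone (fun x => ∫ t in (0:ℝ)..x, ψ t) := fun q s hqs => by
  have := hψ.sub_mul_le_integral_sub (q := q) (fun t ht => hψ ht.le) le_rfl s
  nlinarith [mul_nonneg (sub_nonneg.2 hqs) (h0 q)]

end Primitive

section Conjugate

theorem erealToENNReal_eq_toENNReal : erealToENNReal = EReal.toENNReal := rfl

theorem conj_eq_of_subgradient {g : ℝ → ℝ} {q y : ℝ} (hsub : ∀ s, (s - q) * y ≤ g s - g q) :
    conj g y = ((q * y - g q : ℝ) : EReal) :=
  le_antisymm (iSup_le fun s => EReal.coe_le_coe_iff.2 (by nlinarith [hsub s]))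
    (le_iSup (fun s => ((s * y - g s : ℝ) : EReal)) q)

theorem ofReal_mul_le_ofReal_sub_add_toENNReal_conj (g : ℝ → ℝ) (q y b : ℝ) :
    ENNReal.ofReal (q * y) ≤ ENNReal.ofReal (g q - b) + (conj g y + b).toENNReal := by
  have hconj : ((q * y - (g q - b) : ℝ) : EReal) ≤ conj g y + b := by
    rw [show q * y - (g q - b) = (q * y - g q) + b by ring, EReal.coe_add]
    exact add_le_add_left (le_iSup (fun s => ((s * y - g s : ℝ) : EReal)) q) _
  calc ENNReal.ofReal (q * y) = ENNReal.ofReal ((g q - b) + (q * y - (g q - b))) := by ring_nf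
    _ ≤ ENNReal.ofReal (g q - b) + ENNReal.ofReal (q * y - (g q - b)) := ENNReal.ofReal_add_le
    _ ≤ ENNReal.ofReal (g q - b) + (conj g y + b).toENNReal := by
      gcongr
      exact EReal.toENNReal_le_toENNReal hconj

theorem ofReal_sub_add_toENNReal_conj_eq {g : ℝ → ℝ} {q y : ℝ}
    (hsub : ∀ s, (s - q) * y ≤ g s - g q) (hq : g 0 ≤ g q) :
    ENNReal.ofReal (g q - g 0) + (conj g y + g 0).toENNReal = ENNReal.ofReal (q * y) := by
  have h0 := hsub 0
  rw [conj_eq_of_subgradient hsub, ← EReal.coe_add, EReal.real_coe_toENNReal,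
    ← ENNReal.ofReal_add (by linarith) (by linarith)]
  ring_nf

theorem EReal.coe_ennreal_add_coe_add_sub_coe (A B : ℝ≥0∞) (b : ℝ) :
    ((A : EReal) + b) + ((B : EReal) - b) = ((A + B : ℝ≥0∞) : EReal) := by
  rw [add_assoc, ← add_sub_assoc, EReal.add_sub_cancel_left, EReal.coe_ennreal_add]

end Conjugate

section QuantileFunction

noncomputable def quantileFun (μ : Measure ℝ) (u : ℝ) : ℝ := sInf {x | u ≤ cdf μ x}

variable {μ : Measure ℝ} {u : ℝ}

theorem quantileFun_le_iff (hu : u ∈ Ioo 0 1) (x : ℝ) : quantileFun μ u ≤ x ↔ u ≤ cdf μ x := by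
  have hne : {x | u ≤ cdf μ x}.Nonempty :=
    ((tendsto_cdf_atTop μ).eventually (eventually_ge_nhds hu.2)).exists
  have hbdd : BddBelow {x | u ≤ cdf μ x} := by
    obtain ⟨x₀, hx₀⟩ :=
      ((tendsto_cdf_atBot μ).eventually (eventually_lt_nhds hu.1)).exists_forall_of_atBot
    exact ⟨x₀, fun x hx => le_of_not_gt fun hlt => (hx₀ x hlt.le).not_ge hx⟩
  refine ⟨fun h => ?_, fun h => csInf_le hbdd h⟩
  have hright : ∀ y ∈ Ioi x, u ≤ cdf μ y := fun y hy => by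
    obtain ⟨z, hz, hzy⟩ := exists_lt_of_csInf_lt hne (h.trans_lt hy)
    exact hz.trans (monotone_cdf μ hzy.le)
  exact ge_of_tendsto (((cdf μ).right_continuous x).mono Ioi_subset_Ici_self)
    (eventually_nhdsWithin_of_forall hright)

theorem lt_quantileFun_iff (hu : u ∈ Ioo 0 1) (x : ℝ) : x < quantileFun μ u ↔ cdf μ x < u := by
  simpa only [not_le] using (quantileFun_le_iff hu x).not

theorem monotoneOn_quantileFun : MonotoneOn (quantileFun μ) (Ioo 0 1) := fun _ hu _ hv huv =>
  (quantileFun_le_iff hu _).2 (huv.trans ((quantileFun_le_iff hv _).1 le_rfl))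

theorem quantileFun_nonneg (h0 : ∀ x < 0, cdf μ x = 0) (hu : u ∈ Ioo 0 1) :
    0 ≤ quantileFun μ u :=
  le_of_forall_lt fun x hx => (lt_quantileFun_iff hu x).2 (by rw [h0 x hx]; exact hu.1)

theorem aemeasurable_quantileFun : AEMeasurable (quantileFun μ) (volume.restrict (Ioo 0 1)) :=
  aemeasurable_restrict_of_monotoneOn measurableSet_Ioo monotoneOn_quantileFun

theorem map_quantileFun [IsProbabilityMeasure μ] :
    (volume.restrict (Ioo 0 1)).map (quantileFun μ) = μ := by
  refine (Measure.ext_of_Iic μ _ fun x => ?_).symm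
  rw [Measure.map_apply_of_aemeasurable aemeasurable_quantileFun measurableSet_Iic,
    Measure.restrict_apply' measurableSet_Ioo, ← ofReal_cdf]
  have hset : quantileFun μ ⁻¹' Iic x ∩ Ioo 0 1 = Iic (cdf μ x) ∩ Ioo 0 1 := by
    ext u
    simp only [mem_inter_iff, mem_preimage, mem_Iic, and_congr_left_iff]
    exact fun hu => quantileFun_le_iff hu x
  rw [hset]
  refine le_antisymm ?_ ?_
  · calc ENNReal.ofReal (cdf μ x) = volume (Ioo 0 (cdf μ x)) := by simp
      _ ≤ volume (Iic (cdf μ x) ∩ Ioo 0 1) := measure_mono fun u hu =>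
        ⟨hu.2.le, hu.1, hu.2.trans_le (cdf_le_one μ x)⟩
  · calc volume (Iic (cdf μ x) ∩ Ioo 0 1) ≤ volume (Icc 0 (cdf μ x)) :=
          measure_mono fun u hu => ⟨hu.2.1.le, hu.1⟩
      _ = ENNReal.ofReal (cdf μ x) := by simp

theorem lintegral_comp_quantileFun [IsProbabilityMeasure μ] {f : ℝ → ℝ≥0∞} (hf : Measurable f) :
    ∫⁻ u in Ioo 0 1, f (quantileFun μ u) = ∫⁻ x, f x ∂μ := by
  conv_rhs => rw [← map_quantileFun (μ := μ)]
  rw [lintegral_map' hf.aemeasurable aemeasurable_quantileFun]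

end QuantileFunction

section RandomVariable

variable {Ω : Type*} [MeasurableSpace Ω] {P : Measure Ω} [IsProbabilityMeasure P] {X : Ω → ℝ}

theorem quantile_eq_quantileFun_map (hXm : Measurable X) :
    quantile P X = quantileFun (P.map X) := by
  have := Measure.isProbabilityMeasure_map (μ := P) hXm.aemeasurable
  ext u
  simp only [quantile, quantileFun, cdf_eq_real, measureReal_def,
    Measure.map_apply hXm measurableSet_Iic]
  rfl

theorem cdf_map_eq_zero_of_nonneg (hXm : Measurable X) (hX : ∀ ω, 0 ≤ X ω) {x : ℝ} (hx : x < 0) :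
    cdf (P.map X) x = 0 := by
  have := Measure.isProbabilityMeasure_map (μ := P) hXm.aemeasurable
  have hempty : X ⁻¹' Iic x = ∅ :=
    eq_empty_of_forall_notMem fun ω hω => (hx.trans_le (hX ω)).not_ge hω
  rw [cdf_eq_real, measureReal_def, Measure.map_apply hXm measurableSet_Iic, hempty]
  simp

theorem quantile_nonneg (hXm : Measurable X) (hX : ∀ ω, 0 ≤ X ω) {u : ℝ} (hu : u ∈ Ioo 0 1) :
    0 ≤ quantile P X u := by
  rw [quantile_eq_quantileFun_map hXm]
  exact quantileFun_nonneg (fun x hx => cdf_map_eq_zero_of_nonneg (P := P) hXm hX hx) hu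

theorem lintegral_comp_quantile (hXm : Measurable X) {f : ℝ → ℝ≥0∞} (hf : Measurable f) :
    ∫⁻ u in Ioo 0 1, f (quantile P X u) = ∫⁻ ω, f (X ω) ∂P := by
  have := Measure.isProbabilityMeasure_map (μ := P) hXm.aemeasurable
  rw [quantile_eq_quantileFun_map hXm, lintegral_comp_quantileFun hf, lintegral_map hf hXm]

theorem expFrom_add_intConj_eq_lintegral (hXm : Measurable X) {g : ℝ → ℝ} (hg : Measurable g)
    (φ : ℝ → ℝ) (b : ℝ) :
    expFrom P g X b + intConj φ g b =
      ((∫⁻ u in Ioo 0 1,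
        (ENNReal.ofReal (g (quantile P X u) - b) + (conj g (φ u) + b).toENNReal) : ℝ≥0∞) :
        EReal) := by
  have hf : Measurable fun x => ENNReal.ofReal (g x - b) := (hg.sub_const b).ennreal_ofReal
  have hfq : AEMeasurable (fun u => ENNReal.ofReal (g (quantile P X u) - b))
      (volume.restrict (Ioo 0 1)) := by
    rw [quantile_eq_quantileFun_map hXm]
    exact hf.comp_aemeasurable aemeasurable_quantileFun
  rw [expFrom, intConj, EReal.coe_ennreal_add_coe_add_sub_coe, erealToENNReal_eq_toENNReal,
    lintegral_add_left' hfq, lintegral_comp_quantile hXm hf]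

theorem specRisk_le_expFrom_add_intConj (hXm : Measurable X) {g : ℝ → ℝ} (hg : Monotone g)
    (φ : ℝ → ℝ) : (specRisk P φ X : EReal) ≤ expFrom P g X (g 0) + intConj φ g (g 0) := by
  rw [expFrom_add_intConj_eq_lintegral hXm hg.measurable, EReal.coe_ennreal_le_coe_ennreal_iff]
  exact lintegral_mono fun u => ofReal_mul_le_ofReal_sub_add_toENNReal_conj g _ _ _

end RandomVariable

section SpectralPrimitive

noncomputable def spectralPrimitive (μ : Measure ℝ) (φ : ℝ → ℝ) (x : ℝ) : ℝ :=
  ∫ t in (0:ℝ)..x, φ (cdf μ t)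

variable {μ : Measure ℝ} {φ : ℝ → ℝ}

theorem cdf_mem_Icc (x : ℝ) : cdf μ x ∈ Icc 0 1 := ⟨cdf_nonneg μ x, cdf_le_one μ x⟩

theorem MonotoneOn.monotone_comp_cdf (hφ : MonotoneOn φ (Icc 0 1)) :
    Monotone fun t => φ (cdf μ t) :=
  fun _ _ hst => hφ (cdf_mem_Icc _) (cdf_mem_Icc _) (monotone_cdf μ hst)

theorem spectralPrimitive_mem_incConvex (hφ : MonotoneOn φ (Icc 0 1))
    (hφ0 : ∀ u ∈ Icc (0:ℝ) 1, 0 ≤ φ u) : spectralPrimitive μ φ ∈ IncConvex :=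
  ⟨hφ.monotone_comp_cdf.monotone_primitive fun t => hφ0 _ (cdf_mem_Icc t),
    hφ.monotone_comp_cdf.convexOn_primitive⟩

theorem sub_mul_le_spectralPrimitive_sub (hφ : MonotoneOn φ (Icc 0 1)) {u : ℝ}
    (hu : u ∈ Ioo 0 1) (s : ℝ) :
    (s - quantileFun μ u) * φ u
      ≤ spectralPrimitive μ φ s - spectralPrimitive μ φ (quantileFun μ u) :=
  hφ.monotone_comp_cdf.sub_mul_le_integral_sub
    (fun t ht => hφ (cdf_mem_Icc t) (Ioo_subset_Icc_self hu) ((lt_quantileFun_iff hu t).1 ht).le)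
    (hφ (Ioo_subset_Icc_self hu) (cdf_mem_Icc _) ((quantileFun_le_iff hu _).1 le_rfl)) s

theorem expFrom_add_intConj_spectralPrimitive {Ω : Type*} [MeasurableSpace Ω] {P : Measure Ω}
    [IsProbabilityMeasure P] {X : Ω → ℝ} (hXm : Measurable X) (hX : ∀ ω, 0 ≤ X ω)
    (hφ : MonotoneOn φ (Icc 0 1)) (hφ0 : ∀ u ∈ Icc (0:ℝ) 1, 0 ≤ φ u) :
    expFrom P (spectralPrimitive (P.map X) φ) X (spectralPrimitive (P.map X) φ 0)
      + intConj φ (spectralPrimitive (P.map X) φ) (spectralPrimitive (P.map X) φ 0)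
      = specRisk P φ X := by
  have hmono := (spectralPrimitive_mem_incConvex (μ := P.map X) hφ hφ0).1
  rw [expFrom_add_intConj_eq_lintegral (P := P) hXm hmono.measurable, specRisk,
    EReal.coe_ennreal_eq_coe_ennreal_iff]
  refine setLIntegral_congr_fun measurableSet_Ioo fun u hu => ?_
  have hq : 0 ≤ quantile P X u := quantile_nonneg hXm hX hu
  rw [quantile_eq_quantileFun_map hXm] at hq ⊢
  exact ofReal_sub_add_toENNReal_conj_eq (sub_mul_le_spectralPrimitive_sub hφ hu) (hmono hq)

end SpectralPrimitive

section NotIntegrable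

theorem MonotoneOn.setLIntegral_Ioo_eq_top {f : ℝ → ℝ} {a b c : ℝ} (hf : MonotoneOn f (Ioo a b))
    (hc : c ∈ Ioo a b) (htop : ∫⁻ u in Ioo a b, ENNReal.ofReal (f u) = ⊤) :
    ∫⁻ u in Ioo c b, ENNReal.ofReal (f u) = ⊤ := by
  have hhead : ∫⁻ u in Ioc a c, ENNReal.ofReal (f u) < ⊤ :=
    calc ∫⁻ u in Ioc a c, ENNReal.ofReal (f u) ≤ ∫⁻ _ in Ioc a c, ENNReal.ofReal (f c) :=
          setLIntegral_mono' measurableSet_Ioc fun u hu =>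
            ENNReal.ofReal_le_ofReal (hf ⟨hu.1, hu.2.trans_lt hc.2⟩ hc hu.2)
      _ < ⊤ := by simp [ENNReal.mul_lt_top]
  have hsum :
      ⊤ ≤ (∫⁻ u in Ioc a c, ENNReal.ofReal (f u)) + ∫⁻ u in Ioo c b, ENNReal.ofReal (f u) :=
    calc ⊤ = ∫⁻ u in Ioc a c ∪ Ioo c b, ENNReal.ofReal (f u) := by
          rw [Ioc_union_Ioo_eq_Ioo hc.1.le hc.2, htop]
      _ ≤ _ := lintegral_union_le _ _ _
  exact (ENNReal.add_eq_top.1 (top_unique hsum)).resolve_left hhead.ne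

theorem exists_pos_of_setIntegral_pos {α : Type*} [MeasurableSpace α] {μ : Measure α}
    {f : α → ℝ} {s : Set α} (hs : MeasurableSet s) (hf : 0 < ∫ x in s, f x ∂μ) :
    ∃ x ∈ s, 0 < f x := by
  by_contra! h
  exact (setIntegral_nonpos hs h).not_gt hf

variable {Ω : Type*} [MeasurableSpace Ω] {P : Measure Ω} [IsProbabilityMeasure P] {X : Ω → ℝ}

theorem lintegral_ofReal_quantile_eq_top (hXm : Measurable X) (hX : ∀ ω, 0 ≤ X ω)
    (hni : ¬ Integrable X P) : ∫⁻ u in Ioo 0 1, ENNReal.ofReal (quantile P X u) = ⊤ := by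
  rw [lintegral_comp_quantile hXm ENNReal.measurable_ofReal]
  by_contra h
  exact hni ((lintegral_ofReal_ne_top_iff_integrable hXm.aestronglyMeasurable
    (ae_of_all _ hX)).1 h)

theorem specRisk_eq_top_of_not_integrable {φ : ℝ → ℝ} (hφ : IsSpectrum φ) (hXm : Measurable X)
    (hX : ∀ ω, 0 ≤ X ω) (hni : ¬ Integrable X P) : specRisk P φ X = ⊤ := by
  obtain ⟨hmono, hφ0, -, hint⟩ := hφ
  obtain ⟨u₀, hu₀, hφu₀⟩ := exists_pos_of_setIntegral_pos measurableSet_Ioo (hint ▸ one_pos)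
  have htail : ∫⁻ u in Ioo u₀ 1, ENNReal.ofReal (quantile P X u) = ⊤ := by
    refine MonotoneOn.setLIntegral_Ioo_eq_top ?_ hu₀
      (lintegral_ofReal_quantile_eq_top hXm hX hni)
    rw [quantile_eq_quantileFun_map hXm]
    exact monotoneOn_quantileFun
  refine top_unique ?_
  calc ⊤ = ENNReal.ofReal (φ u₀) * ∫⁻ u in Ioo u₀ 1, ENNReal.ofReal (quantile P X u) := by
        rw [htail, ENNReal.mul_top (ENNReal.ofReal_pos.2 hφu₀).ne']
    _ ≤ ∫⁻ u in Ioo u₀ 1, ENNReal.ofReal (φ u₀) * ENNReal.ofReal (quantile P X u) :=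
        lintegral_const_mul_le _ _
    _ ≤ ∫⁻ u in Ioo u₀ 1, ENNReal.ofReal (quantile P X u * φ u) := by
        refine setLIntegral_mono' measurableSet_Ioo fun u hu => ?_
        have hu' : u ∈ Ioo (0:ℝ) 1 := ⟨hu₀.1.trans hu.1, hu.2⟩
        rw [← ENNReal.ofReal_mul hφu₀.le, mul_comm]
        exact ENNReal.ofReal_le_ofReal (mul_le_mul_of_nonneg_left
          (hmono (Ioo_subset_Icc_self hu₀) (Ioo_subset_Icc_self hu') hu.1.le)
          (quantile_nonneg hXm hX hu'))
    _ ≤ specRisk P φ X := lintegral_mono_set (Ioo_subset_Ioo_left hu₀.1.le)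

end NotIntegrable

/-- For a spectrum `φ` and every nonnegative random variable `X`,
`ρ_φ(X) = inf_{g ∈ G} { E[g(X)] + ∫_0^1 g^*(φ(u)) du }` in `(-∞,∞]`; in particular,
if `X` is not integrable then both sides equal `+∞`. -/
theorem spectral_inf_representation {Ω : Type*} [MeasurableSpace Ω] (P : Measure Ω)
    [IsProbabilityMeasure P] (φ : ℝ → ℝ) (hφ : IsSpectrum φ)
    (X : Ω → ℝ) (hXm : Measurable X) (hX : ∀ ω, 0 ≤ X ω) :
    (((specRisk P φ X : ℝ≥0∞) : EReal)
        = ⨅ g ∈ IncConvex, expFrom P g X (g 0) + intConj φ g (g 0)) ∧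
      (¬ Integrable X P →
        specRisk P φ X = ⊤ ∧
          (⨅ g ∈ IncConvex, expFrom P g X (g 0) + intConj φ g (g 0)) = (⊤ : EReal)) := by
  have heq : ((specRisk P φ X : ℝ≥0∞) : EReal)
      = ⨅ g ∈ IncConvex, expFrom P g X (g 0) + intConj φ g (g 0) :=
    le_antisymm (le_iInf₂ fun g hg => specRisk_le_expFrom_add_intConj hXm hg.1 φ)
      ((iInf₂_le _ (spectralPrimitive_mem_incConvex hφ.1 hφ.2.1)).trans
        (expFrom_add_intConj_spectralPrimitive hXm hX hφ.1 hφ.2.1).le)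
  refine ⟨heq, fun hni => ?_⟩
  have htop := specRisk_eq_top_of_not_integrable hφ hXm hX hni
  exact ⟨htop, by rw [← heq, htop, EReal.coe_ennreal_top]⟩
end

section
/- Let φ be a spectrum with L=φ(1), let ρ̄≥0, and let J:𝒢→[0,∞] be lower semicontinuous with respect to the metric of compact convergence. Then the infimum of g ↦ J(g) + ∫_0^1 g^*(φ(u)) du over 𝒢 is attained, i.e. there exists g₀∈𝒢 with J(g₀) + ∫_0^1 g₀^*(φ(u)) du = inf_{g∈𝒢} { J(g) + ∫_0^1 g^*(φ(u)) du }. -/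
open MeasureTheory Set NNReal ENNReal

/-- The set `𝒢` of increasing, convex, `L`-Lipschitz functions `g : ℝ → ℝ` with
`0 ≤ g(x) ≤ L·x⁺ + ρ̄`, inside `C(ℝ,ℝ)` with the topology of compact convergence. -/
def GSet (L ρbar : ℝ) : Set C(ℝ, ℝ) :=
  {g | Monotone (g : ℝ → ℝ) ∧ ConvexOn ℝ Set.univ (g : ℝ → ℝ) ∧
    (∀ x y : ℝ, |g x - g y| ≤ L * |x - y|) ∧
    (∀ x : ℝ, 0 ≤ g x ∧ g x ≤ L * max x 0 + ρbar)}

lemma erealToENNReal_coe (r : ℝ) : erealToENNReal (r : EReal) = ENNReal.ofReal r := by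
  rw [erealToENNReal, if_neg (EReal.coe_ne_top r), EReal.toReal_coe]

lemma erealToENNReal_mono {x y : EReal} (h : x ≤ y) :
    erealToENNReal x ≤ erealToENNReal y := by
  rw [erealToENNReal, erealToENNReal]
  by_cases hy : y = ⊤
  · rw [if_pos hy]; exact le_top
  · have hx : x ≠ ⊤ := fun hx => hy (top_le_iff.mp (hx ▸ h))
    rw [if_neg hy, if_neg hx]
    by_cases hxb : x = ⊥
    · simp [hxb]
    · exact ENNReal.ofReal_le_ofReal (EReal.toReal_le_toReal h hxb hy)

/-- Key pointwise identity: the shifted conjugate, truncated to `[0,∞]`, is a countable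
supremum of elementary functions. -/
lemma erealToENNReal_conj_add (g : ℝ → ℝ) (hg : Continuous g) (y b : ℝ) :
    erealToENNReal (conj g y + (b : EReal))
      = ⨆ q : ℚ, ENNReal.ofReal ((q : ℝ) * y - g q + b) := by
  set h : ℝ → ℝ := fun s => s * y - g s + b with hh_def
  have hh : Continuous h := by
    apply Continuous.add _ continuous_const
    exact (continuous_id.mul continuous_const).sub hg
  have stepA : conj g y + (b : EReal) = ⨆ s : ℝ, ((h s : ℝ) : EReal) := by
    apply le_antisymm
    · rw [conj, ← EReal.le_sub_iff_add_le (Or.inl (EReal.coe_ne_bot b))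
        (Or.inl (EReal.coe_ne_top b))]
      refine iSup_le fun s => ?_
      rw [EReal.le_sub_iff_add_le (Or.inl (EReal.coe_ne_bot b)) (Or.inl (EReal.coe_ne_top b))]
      calc ((s * y - g s : ℝ) : EReal) + (b : EReal) = ((h s : ℝ) : EReal) := by
            rw [← EReal.coe_add]
        _ ≤ _ := le_iSup (fun s : ℝ => ((h s : ℝ) : EReal)) s
    · refine iSup_le fun s => ?_
      have : ((h s : ℝ) : EReal) = ((s * y - g s : ℝ) : EReal) + (b : EReal) := by
        rw [← EReal.coe_add]
      rw [this]
      exact add_le_add_left (le_iSup (fun s : ℝ => ((s * y - g s : ℝ) : EReal)) s) _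
  have stepB : (⨆ s : ℝ, ((h s : ℝ) : EReal)) = ⨆ q : ℚ, ((h q : ℝ) : EReal) := by
    apply le_antisymm
    · refine iSup_le fun s => le_of_forall_lt fun c hc => ?_
      induction c with
      | bot =>
          exact lt_of_lt_of_le (EReal.bot_lt_coe _) (le_iSup (fun q : ℚ => ((h q : ℝ) : EReal)) 0)
      | coe r =>
          have hr : r < h s := EReal.coe_lt_coe_iff.mp hc
          obtain ⟨δ, hδ, hcont⟩ := Metric.continuousAt_iff.mp (hh.continuousAt (x := s))
            (h s - r) (by linarith)
          obtain ⟨q, hq1, hq2⟩ := exists_rat_btwn (show s - δ < s + δ by linarith)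
          have hdist : dist (q : ℝ) s < δ := by
            rw [Real.dist_eq, abs_sub_lt_iff]; constructor <;> linarith
          have := hcont hdist
          rw [Real.dist_eq, abs_sub_lt_iff] at this
          have : r < h q := by linarith [this.2]
          exact lt_of_lt_of_le (EReal.coe_lt_coe_iff.mpr this)
            (le_iSup (fun q : ℚ => ((h q : ℝ) : EReal)) q)
      | top => exact absurd hc (not_top_lt)
    · exact iSup_le fun q => le_iSup (fun s : ℝ => ((h s : ℝ) : EReal)) (q : ℝ)
  rw [stepA, stepB]
  set A : EReal := ⨆ q : ℚ, ((h q : ℝ) : EReal) with hA_def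
  have hAbot : A ≠ ⊥ :=
    ((lt_of_lt_of_le (EReal.bot_lt_coe _) (le_iSup (fun q : ℚ => ((h q : ℝ) : EReal)) 0))).ne'
  apply le_antisymm
  · by_cases hA : A = ⊤
    · rw [erealToENNReal, if_pos hA, top_le_iff, iSup_eq_top]
      intro r hr
      have : ((r.toReal : ℝ) : EReal) < A := by
        rw [hA]; exact EReal.coe_lt_top _
      obtain ⟨q, hq⟩ := lt_iSup_iff.mp this
      refine ⟨q, ?_⟩
      have hlt : r.toReal < h q := EReal.coe_lt_coe_iff.mp hq
      calc r = ENNReal.ofReal r.toReal := (ENNReal.ofReal_toReal hr.ne).symm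
        _ < ENNReal.ofReal (h q) :=
            (ENNReal.ofReal_lt_ofReal_iff (lt_of_le_of_lt ENNReal.toReal_nonneg hlt)).mpr hlt
    · rw [erealToENNReal, if_neg hA]
      have hcoe : ((A.toReal : ℝ) : EReal) = A := EReal.coe_toReal hA hAbot
      refine le_of_forall_lt fun c hc => ?_
      have hctop : c ≠ ⊤ := (hc.trans_le le_top).ne
      have hc' : c.toReal < A.toReal := by
        rwa [ENNReal.lt_ofReal_iff_toReal_lt hctop] at hc
      have : ((c.toReal : ℝ) : EReal) < A := by
        rw [← hcoe]; exact EReal.coe_lt_coe_iff.mpr hc'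
      obtain ⟨q, hq⟩ := lt_iSup_iff.mp this
      have hlt : c.toReal < h q := EReal.coe_lt_coe_iff.mp hq
      calc c = ENNReal.ofReal c.toReal := (ENNReal.ofReal_toReal hctop).symm
        _ < ENNReal.ofReal (h q) :=
            (ENNReal.ofReal_lt_ofReal_iff (lt_of_le_of_lt ENNReal.toReal_nonneg hlt)).mpr hlt
        _ ≤ ⨆ q : ℚ, ENNReal.ofReal (h q) := le_iSup (fun q : ℚ => ENNReal.ofReal (h q)) q
  · refine iSup_le fun q => ?_
    rw [← erealToENNReal_coe (h q)]
    exact erealToENNReal_mono (le_iSup (fun q : ℚ => ((h q : ℝ) : EReal)) q)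

/-- Lower semicontinuity of the integral functional on `C(ℝ,ℝ)`. -/
lemma lsc_Phi (ψ : ℝ → ℝ) (hψm : Measurable ψ) (b : ℝ) :
    LowerSemicontinuous (fun g : C(ℝ, ℝ) =>
      ∫⁻ u in Set.Ioo (0:ℝ) 1, ⨆ q : ℚ, ENNReal.ofReal ((q : ℝ) * ψ u - g q + b)) := by
  classical
  set e : ℕ → ℚ := fun n => (Denumerable.eqv ℚ).symm n with he_def
  have he_surj : Function.Surjective e := (Denumerable.eqv ℚ).symm.surjective
  set F : C(ℝ, ℝ) → ℕ → ℝ → ℝ≥0∞ := fun g n u =>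
    ⨆ k ∈ Finset.range n, ENNReal.ofReal ((e k : ℝ) * ψ u - g (e k) + b) with hF_def
  have hsup : ∀ (g : C(ℝ, ℝ)) (u : ℝ),
      (⨆ q : ℚ, ENNReal.ofReal ((q : ℝ) * ψ u - g q + b)) = ⨆ n, F g n u := by
    intro g u
    apply le_antisymm
    · refine iSup_le fun q => ?_
      obtain ⟨k, hk⟩ := he_surj q
      calc ENNReal.ofReal ((q : ℝ) * ψ u - g q + b)
          ≤ F g (k + 1) u := by
            rw [← hk]
            exact le_iSup₂ (f := fun k _ => ENNReal.ofReal ((e k : ℝ) * ψ u - g (e k) + b)) k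
              (Finset.mem_range.mpr (Nat.lt_succ_self k))
        _ ≤ ⨆ n, F g n u := le_iSup (F g · u) (k + 1)
    · exact iSup_le fun n => iSup₂_le fun k _ =>
        le_iSup (fun q : ℚ => ENNReal.ofReal ((q : ℝ) * ψ u - g q + b)) (e k)
  have hFmeas : ∀ (g : C(ℝ, ℝ)) n, Measurable (F g n) := by
    intro g n
    refine Measurable.iSup fun k => Measurable.iSup fun _ => ?_
    exact (((hψm.const_mul _).sub_const _).add_const _).ennreal_ofReal
  have hFmono : ∀ (g : C(ℝ, ℝ)), Monotone (F g) := by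
    intro g m n hmn u
    exact iSup₂_le fun k hk =>
      le_iSup₂ (f := fun k _ => ENNReal.ofReal ((e k : ℝ) * ψ u - g (e k) + b)) k
        (Finset.mem_range.mpr (lt_of_lt_of_le (Finset.mem_range.mp hk) hmn))
  have hPhin : ∀ g : C(ℝ, ℝ),
      (∫⁻ u in Set.Ioo (0:ℝ) 1, ⨆ q : ℚ, ENNReal.ofReal ((q : ℝ) * ψ u - g q + b))
        = ⨆ n, ∫⁻ u in Set.Ioo (0:ℝ) 1, F g n u := by
    intro g
    rw [show (fun u => ⨆ q : ℚ, ENNReal.ofReal ((q : ℝ) * ψ u - g q + b))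
        = fun u => ⨆ n, F g n u from funext fun u => hsup g u]
    exact lintegral_iSup (hFmeas g) (hFmono g)
  have hLSCn : ∀ n, LowerSemicontinuous
      (fun g : C(ℝ, ℝ) => ∫⁻ u in Set.Ioo (0:ℝ) 1, F g n u) := by
    intro n g₀ c hc
    obtain ⟨r, hr0, hr⟩ := ENNReal.lt_iff_exists_add_pos_lt.mp hc
    have hr0' : (0 : ℝ) < r := hr0
    have hev : ∀ᶠ g : C(ℝ, ℝ) in nhds g₀, ∀ k ∈ Finset.range n,
        |g (e k) - g₀ (e k)| < (r : ℝ) := by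
      rw [Filter.eventually_all_finset]
      intro k _
      have hcont : ContinuousAt (fun g : C(ℝ, ℝ) => g ((e k : ℝ))) g₀ :=
        (continuous_eval_const ((e k : ℝ))).continuousAt
      have := hcont (Metric.ball_mem_nhds (g₀ ((e k : ℝ))) hr0')
      filter_upwards [this] with g hg
      simp only [Set.mem_preimage, Metric.mem_ball, Real.dist_eq] at hg
      exact hg
    filter_upwards [hev] with g hg
    have hpt : ∀ u, F g₀ n u ≤ F g n u + (r : ℝ≥0∞) := by
      intro u
      refine iSup₂_le fun k hk => ?_
      have h1 : (e k : ℝ) * ψ u - g₀ (e k) + b ≤ ((e k : ℝ) * ψ u - g (e k) + b) + r := by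
        have := abs_sub_lt_iff.mp (hg k hk)
        linarith [this.1, this.2]
      calc ENNReal.ofReal ((e k : ℝ) * ψ u - g₀ (e k) + b)
          ≤ ENNReal.ofReal (((e k : ℝ) * ψ u - g (e k) + b) + r) := ENNReal.ofReal_le_ofReal h1
        _ ≤ ENNReal.ofReal ((e k : ℝ) * ψ u - g (e k) + b) + ENNReal.ofReal r :=
            ENNReal.ofReal_add_le
        _ = ENNReal.ofReal ((e k : ℝ) * ψ u - g (e k) + b) + (r : ℝ≥0∞) := by
            rw [ENNReal.ofReal_coe_nnreal]
        _ ≤ F g n u + (r : ℝ≥0∞) := by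
            exact add_le_add_left (le_iSup₂
              (f := fun k _ => ENNReal.ofReal ((e k : ℝ) * ψ u - g (e k) + b)) k hk) _
    have hint : (∫⁻ u in Set.Ioo (0:ℝ) 1, F g₀ n u)
        ≤ (∫⁻ u in Set.Ioo (0:ℝ) 1, F g n u) + (r : ℝ≥0∞) := by
      calc (∫⁻ u in Set.Ioo (0:ℝ) 1, F g₀ n u)
          ≤ ∫⁻ u in Set.Ioo (0:ℝ) 1, (F g n u + (r : ℝ≥0∞)) := lintegral_mono hpt
        _ = (∫⁻ u in Set.Ioo (0:ℝ) 1, F g n u) + (r : ℝ≥0∞) * volume (Set.Ioo (0:ℝ) 1) := by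
            rw [lintegral_add_right _ measurable_const, setLIntegral_const]
        _ = (∫⁻ u in Set.Ioo (0:ℝ) 1, F g n u) + (r : ℝ≥0∞) := by
            rw [Real.volume_Ioo]
            norm_num
    have : c + (r : ℝ≥0∞) < (∫⁻ u in Set.Ioo (0:ℝ) 1, F g n u) + (r : ℝ≥0∞) :=
      lt_of_lt_of_le hr hint
    exact (ENNReal.add_lt_add_iff_right (ENNReal.coe_ne_top)).mp this
  rw [show (fun g : C(ℝ, ℝ) =>
      ∫⁻ u in Set.Ioo (0:ℝ) 1, ⨆ q : ℚ, ENNReal.ofReal ((q : ℝ) * ψ u - g q + b))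
      = fun g => ⨆ n, ∫⁻ u in Set.Ioo (0:ℝ) 1, F g n u from funext hPhin]
  exact lowerSemicontinuous_iSup hLSCn

/-- `𝒢` is compact in the topology of compact convergence (Arzelà–Ascoli). -/
lemma gset_isCompact (L ρbar : ℝ) (hL : 0 ≤ L) : IsCompact (GSet L ρbar) := by
  classical
  set T : Set (ℝ → ℝ) := {f | Monotone f ∧ ConvexOn ℝ Set.univ f ∧
    (∀ x y : ℝ, |f x - f y| ≤ L * |x - y|) ∧
    (∀ x : ℝ, 0 ≤ f x ∧ f x ≤ L * max x 0 + ρbar)} with hT_def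
  have himg : ContinuousMap.toFun '' GSet L ρbar = T := by
    apply Set.Subset.antisymm
    · rintro f ⟨g, hg, rfl⟩
      exact hg
    · rintro f ⟨h1, h2, h3, h4⟩
      have hlip : LipschitzWith (Real.toNNReal L) f := by
        apply LipschitzWith.of_dist_le_mul
        intro x y
        rw [Real.dist_eq, Real.dist_eq, Real.coe_toNNReal L hL]
        exact h3 x y
      exact ⟨⟨f, hlip.continuous⟩, ⟨h1, h2, h3, h4⟩, rfl⟩
  have hclosed : IsClosed T := by
    have hmono : IsClosed {f : ℝ → ℝ | Monotone f} := by
      have : {f : ℝ → ℝ | Monotone f} =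
          ⋂ (p : ℝ × ℝ), {f : ℝ → ℝ | p.1 ≤ p.2 → f p.1 ≤ f p.2} := by
        ext f
        simp only [Set.mem_setOf_eq, Set.mem_iInter, Prod.forall]
        exact ⟨fun h a b hab => h hab, fun h a b hab => h a b hab⟩
      rw [this]
      refine isClosed_iInter fun p => ?_
      by_cases h : p.1 ≤ p.2
      · simp only [h, forall_true_left]
        exact isClosed_le (continuous_apply p.1) (continuous_apply p.2)
      · simp only [h, false_implies, Set.setOf_true]
        exact isClosed_univ
    have hconv : IsClosed {f : ℝ → ℝ | ConvexOn ℝ Set.univ f} := by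
      have : {f : ℝ → ℝ | ConvexOn ℝ Set.univ f} =
          ⋂ (p : (ℝ × ℝ) × ℝ × ℝ), {f : ℝ → ℝ |
            (0 ≤ p.2.1 ∧ 0 ≤ p.2.2 ∧ p.2.1 + p.2.2 = 1) →
              f (p.2.1 * p.1.1 + p.2.2 * p.1.2) ≤ p.2.1 * f p.1.1 + p.2.2 * f p.1.2} := by
        ext f
        simp only [Set.mem_setOf_eq, Set.mem_iInter, Prod.forall]
        constructor
        · rintro hf x y a b' ⟨ha, hb, hab⟩
          simpa [smul_eq_mul] using hf.2 (Set.mem_univ x) (Set.mem_univ y) ha hb hab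
        · intro h
          refine ⟨convex_univ, ?_⟩
          intro x _ y _ a b' ha hb hab
          simpa [smul_eq_mul] using h x y a b' ⟨ha, hb, hab⟩
      rw [this]
      refine isClosed_iInter fun p => ?_
      by_cases h : 0 ≤ p.2.1 ∧ 0 ≤ p.2.2 ∧ p.2.1 + p.2.2 = 1
      · simp only [eq_true h, true_implies]
        have hcl : IsClosed {f : ℝ → ℝ |
            f (p.2.1 * p.1.1 + p.2.2 * p.1.2) ≤ p.2.1 * f p.1.1 + p.2.2 * f p.1.2} := by
          apply isClosed_le
          · exact continuous_apply _
          · exact (continuous_const.mul (continuous_apply _)).add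
              (continuous_const.mul (continuous_apply _))
        exact hcl
      · simp only [eq_false h, false_implies, Set.setOf_true]
        exact isClosed_univ
    have hlip : IsClosed {f : ℝ → ℝ | ∀ x y : ℝ, |f x - f y| ≤ L * |x - y|} := by
      have : {f : ℝ → ℝ | ∀ x y : ℝ, |f x - f y| ≤ L * |x - y|} =
          ⋂ (p : ℝ × ℝ), {f : ℝ → ℝ | |f p.1 - f p.2| ≤ L * |p.1 - p.2|} := by
        ext f
        simp only [Set.mem_setOf_eq, Set.mem_iInter, Prod.forall]
      rw [this]
      exact isClosed_iInter fun p => isClosed_le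
        (((continuous_apply p.1).sub (continuous_apply p.2)).abs) continuous_const
    have hbnd : IsClosed {f : ℝ → ℝ | ∀ x : ℝ, 0 ≤ f x ∧ f x ≤ L * max x 0 + ρbar} := by
      have : {f : ℝ → ℝ | ∀ x : ℝ, 0 ≤ f x ∧ f x ≤ L * max x 0 + ρbar} =
          ⋂ (x : ℝ), ({f : ℝ → ℝ | 0 ≤ f x} ∩ {f : ℝ → ℝ | f x ≤ L * max x 0 + ρbar}) := by
        ext f
        simp only [Set.mem_setOf_eq, Set.mem_iInter, Set.mem_inter_iff]
      rw [this]
      exact isClosed_iInter fun x => (isClosed_le continuous_const (continuous_apply x)).inter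
        (isClosed_le (continuous_apply x) continuous_const)
    have : T = {f : ℝ → ℝ | Monotone f} ∩ ({f | ConvexOn ℝ Set.univ f} ∩
        ({f | ∀ x y : ℝ, |f x - f y| ≤ L * |x - y|} ∩
          {f | ∀ x : ℝ, 0 ≤ f x ∧ f x ≤ L * max x 0 + ρbar})) := by
      ext f
      simp only [hT_def, Set.mem_setOf_eq, Set.mem_inter_iff]
    rw [this]
    exact hmono.inter (hconv.inter (hlip.inter hbnd))
  have hsub : T ⊆ Set.pi Set.univ (fun x : ℝ => Set.Icc 0 (L * max x 0 + ρbar)) := by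
    rintro f ⟨_, _, _, h4⟩ x _
    exact ⟨(h4 x).1, (h4 x).2⟩
  have hTcompact : IsCompact T :=
    IsCompact.of_isClosed_subset (isCompact_univ_pi fun x => isCompact_Icc) hclosed hsub
  have hequi : Equicontinuous ((↑) : GSet L ρbar → ℝ → ℝ) := by
    apply Metric.equicontinuous_of_continuity_modulus (fun t => L * t)
    · have : Filter.Tendsto (fun t : ℝ => L * t) (nhds 0) (nhds (L * 0)) :=
        (continuous_const.mul continuous_id).tendsto 0
      simpa using this
    · rintro x y ⟨g, _, _, h3, _⟩
      rw [Real.dist_eq, Real.dist_eq]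
      exact h3 x y
  exact ArzelaAscoli.isCompact_of_equicontinuous _ (himg ▸ hTcompact) hequi

/-- A lower semicontinuous `[0,∞]`-valued function on a nonempty compact space attains
its minimum. -/
lemma exists_min_of_lsc {X : Type*} [TopologicalSpace X] [CompactSpace X] [Nonempty X]
    (K : X → ℝ≥0∞) (hK : LowerSemicontinuous K) : ∃ x : X, ∀ y : X, K x ≤ K y := by
  classical
  set m : ℝ≥0∞ := ⨅ y : X, K y with hm_def
  by_cases hm : m = ⊤
  · obtain ⟨x⟩ := ‹Nonempty X›
    refine ⟨x, fun y => ?_⟩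
    have : K y = ⊤ := le_antisymm le_top ((iInf_le (fun y : X => K y) y).trans_eq' hm)
    rw [this]
    exact le_top
  · have hne : Nonempty {c : ℝ≥0∞ // m < c} := ⟨⟨⊤, lt_top_iff_ne_top.mpr hm⟩⟩
    set t : {c : ℝ≥0∞ // m < c} → Set X := fun c => {x | K x ≤ c.1} with ht_def
    have hdir : Directed (· ⊇ ·) t := by
      intro c d
      refine ⟨⟨min c.1 d.1, lt_min c.2 d.2⟩, ?_, ?_⟩
      · intro x hx
        exact le_trans (Set.mem_setOf_eq ▸ hx) (min_le_left _ _)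
      · intro x hx
        exact le_trans (Set.mem_setOf_eq ▸ hx) (min_le_right _ _)
    have htne : ∀ c, (t c).Nonempty := by
      intro c
      obtain ⟨y, hy⟩ := iInf_lt_iff.mp (lt_of_lt_of_le c.2 le_rfl : m < c.1)
      exact ⟨y, hy.le⟩
    have htcl : ∀ c, IsClosed (t c) := fun c => hK.isClosed_preimage c.1
    obtain ⟨x, hx⟩ := IsCompact.nonempty_iInter_of_directed_nonempty_isCompact_isClosed
      t hdir htne (fun c => (htcl c).isCompact) htcl
    refine ⟨x, fun y => le_trans ?_ (iInf_le (fun y : X => K y) y)⟩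
    refine le_of_forall_gt_imp_ge_of_dense fun c hc => ?_
    exact Set.mem_iInter.mp hx ⟨c, hc⟩

/-- Let `φ` be a spectrum with `L = φ(1)`, `ρ̄ ≥ 0`, and let
`J : 𝒢 → [0,∞]` be lower semicontinuous. Then the infimum of
`g ↦ J(g) + ∫_0^1 g^*(φ(u)) du` over `𝒢` is attained. -/
theorem outer_problem_existence (φ : ℝ → ℝ) (hφ : IsSpectrum φ)
    (ρbar : ℝ) (hρ : 0 ≤ ρbar)
    (J : GSet (φ 1) ρbar → ℝ≥0∞) (hJ : LowerSemicontinuous J) :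
    ∃ g₀ : GSet (φ 1) ρbar,
      (J g₀ : EReal) + intConj φ ((g₀ : C(ℝ, ℝ)) : ℝ → ℝ) ρbar
        = ⨅ g : GSet (φ 1) ρbar,
            ((J g : EReal) + intConj φ ((g : C(ℝ, ℝ)) : ℝ → ℝ) ρbar) := by
  classical
  obtain ⟨hmono, hnonneg, _hcont, _hint⟩ := hφ
  have hL : 0 ≤ φ 1 := hnonneg 1 (by norm_num)
  -- monotone modification of `φ`, agreeing with `φ` on `(0,1)`
  set ψ : ℝ → ℝ := fun u => φ (min 1 (max 0 u)) with hψ_def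
  have hψmono : Monotone ψ := by
    intro u v huv
    have hu : min 1 (max 0 u) ∈ Set.Icc (0:ℝ) 1 :=
      ⟨le_min zero_le_one (le_max_left 0 u), min_le_left _ _⟩
    have hv : min 1 (max 0 v) ∈ Set.Icc (0:ℝ) 1 :=
      ⟨le_min zero_le_one (le_max_left 0 v), min_le_left _ _⟩
    exact hmono hu hv (min_le_min le_rfl (max_le_max le_rfl huv))
  have hψmeas : Measurable ψ := hψmono.measurable
  have hψeq : ∀ u ∈ Set.Ioo (0:ℝ) 1, ψ u = φ u := by
    intro u hu
    rw [hψ_def]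
    simp only
    rw [max_eq_right hu.1.le, min_eq_right hu.2.le]
  -- rewriting intConj via the countable supremum
  set Φ : C(ℝ, ℝ) → ℝ≥0∞ := fun g =>
    ∫⁻ u in Set.Ioo (0:ℝ) 1, ⨆ q : ℚ, ENNReal.ofReal ((q : ℝ) * ψ u - g q + ρbar) with hΦ_def
  have hIC : ∀ g : C(ℝ, ℝ),
      intConj φ (⇑g) ρbar = ((Φ g : ℝ≥0∞) : EReal) - (ρbar : EReal) := by
    intro g
    rw [intConj]
    have : (∫⁻ u in Set.Ioo (0:ℝ) 1, erealToENNReal (conj (⇑g) (φ u) + (ρbar : EReal))) = Φ g := by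
      apply setLIntegral_congr_fun measurableSet_Ioo
      intro u hu
      dsimp only
      rw [← hψeq u hu, erealToENNReal_conj_add (⇑g) g.continuous (ψ u) ρbar]
    rw [this]
  have hΦlsc : LowerSemicontinuous Φ := lsc_Phi ψ hψmeas ρbar
  -- compactness and nonemptiness of 𝒢
  have hcpt := gset_isCompact (φ 1) ρbar hL
  haveI : CompactSpace (GSet (φ 1) ρbar) := isCompact_iff_compactSpace.mp hcpt
  haveI : Nonempty (GSet (φ 1) ρbar) := by
    refine ⟨⟨⟨fun x => φ 1 * max x 0,
      continuous_const.mul (continuous_id.max continuous_const)⟩, ?_, ?_, ?_, ?_⟩⟩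
    · intro a b hab
      exact mul_le_mul_of_nonneg_left (max_le_max hab le_rfl) hL
    · have h1 : ConvexOn ℝ Set.univ (fun x : ℝ => φ 1 • (_root_.id ⊔ (fun _ : ℝ => (0:ℝ))) x) :=
        ConvexOn.smul hL ((convexOn_id convex_univ).sup (convexOn_const (0:ℝ) convex_univ))
      have h2 : (fun x : ℝ => φ 1 • (_root_.id ⊔ (fun _ : ℝ => (0:ℝ))) x)
          = fun x : ℝ => φ 1 * max x 0 := by
        funext x
        simp [Pi.sup_apply, smul_eq_mul]
      rw [h2] at h1
      exact h1
    · intro x y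
      show |φ 1 * max x 0 - φ 1 * max y 0| ≤ φ 1 * |x - y|
      rw [← mul_sub, abs_mul, abs_of_nonneg hL]
      exact mul_le_mul_of_nonneg_left (abs_max_sub_max_le_abs x y 0) hL
    · intro x
      exact ⟨mul_nonneg hL (le_max_right x 0), le_add_of_nonneg_right hρ⟩
  -- the total functional
  set K : GSet (φ 1) ρbar → ℝ≥0∞ := fun g => J g + Φ (g : C(ℝ, ℝ)) with hK_def
  have hKlsc : LowerSemicontinuous K :=
    hJ.add (hΦlsc.comp continuous_subtype_val)
  obtain ⟨g₀, hg₀⟩ := exists_min_of_lsc K hKlsc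
  refine ⟨g₀, ?_⟩
  have hF : ∀ g : GSet (φ 1) ρbar,
      (J g : EReal) + intConj φ ((g : C(ℝ, ℝ)) : ℝ → ℝ) ρbar
        = ((K g : ℝ≥0∞) : EReal) - (ρbar : EReal) := by
    intro g
    rw [hIC (g : C(ℝ, ℝ)), sub_eq_add_neg, sub_eq_add_neg, ← add_assoc]
    congr 1
    exact (EReal.coe_ennreal_add (J g) (Φ (g : C(ℝ, ℝ)))).symm
  have hle : ∀ g : GSet (φ 1) ρbar,
      (J g₀ : EReal) + intConj φ ((g₀ : C(ℝ, ℝ)) : ℝ → ℝ) ρbar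
        ≤ (J g : EReal) + intConj φ ((g : C(ℝ, ℝ)) : ℝ → ℝ) ρbar := by
    intro g
    rw [hF g₀, hF g, sub_eq_add_neg, sub_eq_add_neg]
    exact add_le_add_left (EReal.coe_ennreal_le_coe_ennreal_iff.mpr (hg₀ g)) _
  exact le_antisymm (le_iInf hle) (iInf_le _ g₀)
end
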